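/- arXiv:2603.20035 — 6 statements merged into one kernel-verified Lean document; each statement's English description precedes it below -/
import Mathlib

section
/- Let Q₀ = 1 - (√2·(1 + 2^(1/6))³)/16. Then for all t₁, t₂ ∈ [0,1] with t₁² + t₂² ≤ 2^(2/3), the QBER Q = 1 - (2 + t₁ + t₂)³/64 satisfies Q ≥ Q₀, and Q₀ ≈ 0.1549 (specifically 0.154 < Q₀ < 0.156). -/
theorem stmt2 :
    let Q₀ : ℝ := 1 - (Real.sqrt 2 * (1 + (2:ℝ) ^ ((1:ℝ)/6)) ^ 3) / 16
    (∀ t₁ t₂ : ℝ, 0 ≤ t₁ → t₁ ≤ 1 → 0 ≤ t₂ → t₂ ≤ 1 →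
      t₁ ^ 2 + t₂ ^ 2 ≤ (2:ℝ) ^ ((2:ℝ)/3) →
      1 - (2 + t₁ + t₂) ^ 3 / 64 ≥ Q₀) ∧
    0.154 < Q₀ ∧ Q₀ < 0.156 := by
  intro Q₀
  set a : ℝ := (2:ℝ) ^ ((1:ℝ)/6) with ha
  have ha0 : 0 < a := Real.rpow_pos_of_pos two_pos _
  have ha6 : a ^ 6 = 2 := by
    rw [ha, ← Real.rpow_natCast ((2:ℝ) ^ ((1:ℝ)/6)) 6, ← Real.rpow_mul (by norm_num)]
    norm_num
  have hs : Real.sqrt 2 = a ^ 3 := by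
    rw [Real.sqrt_eq_rpow, ha, ← Real.rpow_natCast ((2:ℝ) ^ ((1:ℝ)/6)) 3,
      ← Real.rpow_mul (by norm_num)]
    norm_num
  have h23 : (2:ℝ) ^ ((2:ℝ)/3) = a ^ 4 := by
    rw [ha, ← Real.rpow_natCast ((2:ℝ) ^ ((1:ℝ)/6)) 4, ← Real.rpow_mul (by norm_num)]
    norm_num
  have hQ : Q₀ = 1 - (a ^ 3 * (1 + a) ^ 3) / 16 := by
    show (1 - (Real.sqrt 2 * (1 + a) ^ 3) / 16) = _
    rw [hs]
  have hlow : (1.1224:ℝ) < a := by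
    by_contra h
    push_neg at h
    have : a ^ 6 ≤ (1.1224:ℝ) ^ 6 := pow_le_pow_left₀ ha0.le h 6
    rw [ha6] at this; norm_num at this
  have hhigh : a < 1.1225 := by
    by_contra h
    push_neg at h
    have : (1.1225:ℝ) ^ 6 ≤ a ^ 6 := pow_le_pow_left₀ (by norm_num) h 6
    rw [ha6] at this; norm_num at this
  have hsum_lo : (2.3821:ℝ) < a + a ^ 2 := by nlinarith
  have hsum_hi : a + a ^ 2 < 2.3826 := by nlinarith
  have hcube : a ^ 3 * (1 + a) ^ 3 = (a + a ^ 2) ^ 3 := by ring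
  have hcube_lo : (2.3821:ℝ) ^ 3 < (a + a ^ 2) ^ 3 := by
    apply pow_lt_pow_left₀ hsum_lo (by norm_num)
    norm_num
  have hcube_hi : (a + a ^ 2) ^ 3 < (2.3826:ℝ) ^ 3 := by
    apply pow_lt_pow_left₀ hsum_hi (by positivity)
    norm_num
  refine ⟨?_, ?_, ?_⟩
  · intro t₁ t₂ h10 h11 h20 h21 hc
    rw [hQ]
    rw [h23] at hc
    have hs5 : t₁ + t₂ ≤ a ^ 5 := by
      have ha5 : 0 < a ^ 5 := by positivity
      have h25 : (a ^ 5) ^ 2 = 2 * a ^ 4 := by linear_combination a ^ 4 * ha6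
      have hsq : (t₁ + t₂) ^ 2 ≤ (a ^ 5) ^ 2 := by
        rw [h25]; nlinarith [sq_nonneg (t₁ - t₂)]
      exact le_of_pow_le_pow_left₀ two_ne_zero ha5.le hsq
    have hmono : (2 + t₁ + t₂) ^ 3 ≤ (2 + a ^ 5) ^ 3 := by
      apply pow_le_pow_left₀ (by linarith) (by linarith)
    have hkey : (2 + a ^ 5) ^ 3 = 4 * (a ^ 3 * (1 + a) ^ 3) := by
      linear_combination (a ^ 9 + 6 * a ^ 4 + 2 * a ^ 3 - 4) * ha6
    rw [hkey] at hmono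
    linarith
  · rw [hQ, hcube]
    norm_num at hcube_hi
    linarith
  · rw [hQ, hcube]
    norm_num at hcube_lo
    linarith
end

section
/- For all real numbers t_{i,j} (i = 1,2,3; j = 1,2) with 0 ≤ t_{i,j} ≤ 1 and satisfying (t_{1,1}·t_{2,1}·t_{3,1})^(2/3) + (t_{1,2}·t_{2,2}·t_{3,2})^(2/3) ≤ 2^(2/3), the quantity H = Σ_{j₁,j₂,j₃ ∈ {1,2}} Π_{i=1}^{3} (1 + t_{i,j_i}) satisfies H ≤ 16·(3 + (2^(2/3) - 1)^(3/2)), with equality when t_{i,1} = 1 for all i, t_{1,2} = t_{2,2} = 1, and t_{3,2} = (2^(2/3) - 1)^(3/2). -/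
private lemma lemP1 (x : ℝ) (hx : 0.7664 ≤ x) (hx1 : x ≤ 1) :
    0 ≤ 3.45015*(1+x+x^2)*(0.7664+0.7664)
      - (3+x^3)*(1+x)*(0.7664^2+0.7665*0.7664+0.58752225)
      - 2.7*(1.58752225 - x^2 - 0.7664^2) := by
  have hu : (0:ℝ) ≤ x - 0.7664 := by linarith
  have hv : (0:ℝ) ≤ 1 - x := by linarith
  nlinarith [mul_nonneg (mul_nonneg (mul_nonneg hu hu) hu) hu,
    mul_nonneg (mul_nonneg (mul_nonneg hu hu) hu) hv,
    mul_nonneg (mul_nonneg (mul_nonneg hu hu) hv) hv,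
    mul_nonneg (mul_nonneg (mul_nonneg hu hv) hv) hv,
    mul_nonneg (mul_nonneg (mul_nonneg hv hv) hv) hv]

private lemma lemP2 (x : ℝ) (hx : 0.7664 ≤ x) (hx1 : x ≤ 1) :
    0 ≤ 3.45015*(1+x+x^2)*(x+0.7664)
      - (3+x^3)*(1+x)*(x^2+0.7665*x+0.58752225)
      - 2.7*(1.58752225 - 2*x^2) := by
  have hu : (0:ℝ) ≤ x - 0.7664 := by linarith
  have hv : (0:ℝ) ≤ 1 - x := by linarith
  nlinarith [mul_nonneg (mul_nonneg (mul_nonneg (mul_nonneg (mul_nonneg hu hu) hu) hu) hu) hu,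
    mul_nonneg (mul_nonneg (mul_nonneg (mul_nonneg (mul_nonneg hu hu) hu) hu) hu) hv,
    mul_nonneg (mul_nonneg (mul_nonneg (mul_nonneg (mul_nonneg hu hu) hu) hu) hv) hv,
    mul_nonneg (mul_nonneg (mul_nonneg (mul_nonneg (mul_nonneg hu hu) hu) hv) hv) hv,
    mul_nonneg (mul_nonneg (mul_nonneg (mul_nonneg (mul_nonneg hu hu) hv) hv) hv) hv,
    mul_nonneg (mul_nonneg (mul_nonneg (mul_nonneg (mul_nonneg hu hv) hv) hv) hv) hv,
    mul_nonneg (mul_nonneg (mul_nonneg (mul_nonneg (mul_nonneg hv hv) hv) hv) hv) hv]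

private lemma lemG (x y : ℝ) (hy : 0.7664 ≤ y) (hyx : y ≤ x) (hx1 : x ≤ 1) :
    2.7*(1.58752225 - x^2 - y^2)
      ≤ 3.45015*(1+x+x^2)*(y+0.7664) - (3+x^3)*(1+x)*(y^2+0.7665*y+0.58752225) := by
  have hx : (0.7664:ℝ) ≤ x := le_trans hy hyx
  have h1 := lemP1 x hx hx1
  have h2 := lemP2 x hx hx1
  rcases eq_or_lt_of_le hx with heq | hlt
  · have hy' : y = 0.7664 := le_antisymm (heq ▸ hyx) hy
    rw [← heq, hy']
    norm_num
  · have hx0 : (0:ℝ) ≤ x := by linarith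
    have hA : (0:ℝ) ≤ (3+x^3)*(1+x) - 2.7 := by nlinarith [pow_nonneg hx0 3]
    have k1 : 0 ≤ (x - y) * (3.45015*(1+x+x^2)*(0.7664+0.7664)
      - (3+x^3)*(1+x)*(0.7664^2+0.7665*0.7664+0.58752225)
      - 2.7*(1.58752225 - x^2 - 0.7664^2)) := mul_nonneg (by linarith) h1
    have k2 : 0 ≤ (y - 0.7664) * (3.45015*(1+x+x^2)*(x+0.7664)
      - (3+x^3)*(1+x)*(x^2+0.7665*x+0.58752225)
      - 2.7*(1.58752225 - 2*x^2)) := mul_nonneg (by linarith) h2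
    have k3 : 0 ≤ ((3+x^3)*(1+x) - 2.7) * ((x - y) * ((y - 0.7664) * (x - 0.7664))) :=
      mul_nonneg hA (mul_nonneg (by linarith) (mul_nonneg (by linarith) (by linarith)))
    nlinarith [k1, k2, k3, hlt]

set_option maxHeartbeats 1000000 in
private lemma lemB' (x y d : ℝ) (hx : 0 ≤ x) (hx1 : x ≤ 1) (hy : 0 ≤ y) (hy1 : y ≤ 1)
    (hyx : y ≤ x) (hd1 : 0.7664 ≤ d) (hd2 : d ≤ 0.7665) (hc : x^2 + y^2 ≤ 1 + d^2) :
    3*x^3 + 3*y^3 + x^3*y^3 ≤ 3 + 4*d^3 := by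
  rcases le_total y d with h | h
  · have h1 : y^3 ≤ d^3 := by
      nlinarith [mul_nonneg (sub_nonneg.2 h) (add_nonneg (add_nonneg (mul_self_nonneg d)
        (mul_nonneg (by linarith : (0:ℝ) ≤ d) hy)) (mul_self_nonneg y))]
    have h2 : x^3 ≤ 1 := by
      nlinarith [mul_nonneg (sub_nonneg.2 hx1) (add_nonneg (add_nonneg (by norm_num : (0:ℝ) ≤ 1) hx) (mul_self_nonneg x))]
    have h3 : 0 ≤ y^3 := pow_nonneg hy 3
    have h4 : 0 ≤ x^3 := pow_nonneg hx 3
    nlinarith [mul_nonneg h3 (sub_nonneg.2 h2)]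
  · -- d ≤ y ≤ x ≤ 1
    have hy' : (0.7664:ℝ) ≤ y := le_trans hd1 h
    have hx2 : x^2 + y^2 ≤ 1.58752225 := by nlinarith
    have hG := lemG x y hy' hyx hx1
    have hWt : 0 ≤ 3.45015*(1+x+x^2)*(y+0.7664) - (3+x^3)*(1+x)*(y^2+0.7665*y+0.58752225) := by
      nlinarith [hG, hx2]
    have hd0 : (0:ℝ) ≤ d := by linarith
    have e1 : (3.45015:ℝ) ≤ 3 + d^3 := by nlinarith
    have e2 : y^2 + y*d + d^2 ≤ y^2 + 0.7665*y + 0.58752225 := by nlinarith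
    have hW : 0 ≤ (3+d^3)*(1+x+x^2)*(y+d) - (3+x^3)*(1+x)*(y^2+y*d+d^2) := by
      have m1 : 3.45015*(1+x+x^2)*(y+0.7664) ≤ (3+d^3)*(1+x+x^2)*(y+d) := by
        have hb : (0:ℝ) ≤ 1+x+x^2 := by positivity
        have hcf : (0:ℝ) ≤ 3.45015*(1+x+x^2) := by positivity
        have s1 : 3.45015*(1+x+x^2) ≤ (3+d^3)*(1+x+x^2) :=
          mul_le_mul_of_nonneg_right e1 hb
        have s2 : 3.45015*(1+x+x^2)*(y+0.7664) ≤ 3.45015*(1+x+x^2)*(y+d) :=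
          mul_le_mul_of_nonneg_left (by linarith) hcf
        have s3 : 3.45015*(1+x+x^2)*(y+d) ≤ (3+d^3)*(1+x+x^2)*(y+d) :=
          mul_le_mul_of_nonneg_right s1 (by linarith)
        linarith
      have m2 : (3+x^3)*(1+x)*(y^2+y*d+d^2) ≤ (3+x^3)*(1+x)*(y^2+0.7665*y+0.58752225) := by
        apply mul_le_mul_of_nonneg_left e2
        have h4 : (0:ℝ) ≤ x^3 := pow_nonneg hx 3
        have h5 : (0:ℝ) ≤ 3+x^3 := by linarith
        have h6 : (0:ℝ) ≤ 1+x := by linarith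
        exact mul_nonneg h5 h6
      linarith
    have key1 : 0 ≤ (1-x) * ((3+d^3)*(1+x+x^2)*(y+d) - (3+x^3)*(1+x)*(y^2+y*d+d^2)) :=
      mul_nonneg (by linarith) hW
    have key2 : 0 ≤ ((3+x^3)*(y^2+y*d+d^2)) * (1+d^2-x^2-y^2) := by
      apply mul_nonneg _ (by linarith)
      have h4 : 0 ≤ x^3 := pow_nonneg hx 3
      nlinarith [mul_nonneg hy hd0, sq_nonneg y, sq_nonneg d]
    have hyd : (0:ℝ) < y + d := by linarith
    have hT : 0 ≤ (y+d) * (3 + 4*d^3 - 3*x^3 - 3*y^3 - x^3*y^3) := by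
      have hid : (y+d) * (3 + 4*d^3 - 3*x^3 - 3*y^3 - x^3*y^3)
          = (1-x) * ((3+d^3)*(1+x+x^2)*(y+d) - (3+x^3)*(1+x)*(y^2+y*d+d^2))
            + ((3+x^3)*(y^2+y*d+d^2)) * (1+d^2-x^2-y^2) := by ring
      rw [hid]
      linarith
    have hT2 : 0 ≤ 3 + 4*d^3 - 3*x^3 - 3*y^3 - x^3*y^3 := nonneg_of_mul_nonneg_right hT hyd
    linarith

private lemma lemB (x y d : ℝ) (hx : 0 ≤ x) (hx1 : x ≤ 1) (hy : 0 ≤ y) (hy1 : y ≤ 1)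
    (hd : 0 ≤ d) (hd4 : (d^2+1)^3 = 4) (hc : x^2 + y^2 ≤ 1 + d^2) :
    3*x^3 + 3*y^3 + x^3*y^3 ≤ 3 + 4*d^3 := by
  have hd1 : (0.7664:ℝ) ≤ d := by nlinarith [sq_nonneg (d - 0.7664), sq_nonneg (d^2 - 0.5874), sq_nonneg d]
  have hd2 : d ≤ 0.7665 := by nlinarith [sq_nonneg (d - 0.7665), sq_nonneg (d^2 - 0.5875), sq_nonneg d]
  rcases le_total y x with h | h
  · exact lemB' x y d hx hx1 hy hy1 h hd1 hd2 hc
  · have := lemB' y x d hy hy1 hx hx1 h hd1 hd2 (by linarith)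
    linarith

set_option maxHeartbeats 1000000 in
private lemma lemC (a1 a2 a3 b1 b2 b3 : ℝ)
    (ha1 : 0 ≤ a1) (ha1' : a1 ≤ 1) (ha2 : 0 ≤ a2) (ha2' : a2 ≤ 1)
    (ha3 : 0 ≤ a3) (ha3' : a3 ≤ 1) (hb1 : 0 ≤ b1) (hb1' : b1 ≤ 1)
    (hb2 : 0 ≤ b2) (hb2' : b2 ≤ 1) (hb3 : 0 ≤ b3) (hb3' : b3 ≤ 1) :
    (2+a1+b1)*(2+a2+b2)*(2+a3+b3) ≤ 4*(3+a1*a2*a3)*(3+b1*b2*b3) := by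
  have k : ∀ x y z u v w : ℝ, 0 ≤ x → 0 ≤ y → 0 ≤ z → 0 ≤ u → 0 ≤ v → 0 ≤ w →
      0 ≤ x*y*z*u*v*w := by
    intros x y z u v w hx hy hz hu hv hw
    positivity
  linarith [
    k (1-a1) (1-a2) (1-a3) (1-b1) (1-b2) (1-b3) (by linarith) (by linarith) (by linarith) (by linarith) (by linarith) (by linarith),
    k (1-a1) (1-a2) (1-a3) (1-b1) (1-b2) b3 (by linarith) (by linarith) (by linarith) (by linarith) (by linarith) (by linarith),
    k (1-a1) (1-a2) (1-a3) (1-b1) b2 (1-b3) (by linarith) (by linarith) (by linarith) (by linarith) (by linarith) (by linarith),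
    k (1-a1) (1-a2) (1-a3) (1-b1) b2 b3 (by linarith) (by linarith) (by linarith) (by linarith) (by linarith) (by linarith),
    k (1-a1) (1-a2) (1-a3) b1 (1-b2) (1-b3) (by linarith) (by linarith) (by linarith) (by linarith) (by linarith) (by linarith),
    k (1-a1) (1-a2) (1-a3) b1 (1-b2) b3 (by linarith) (by linarith) (by linarith) (by linarith) (by linarith) (by linarith),
    k (1-a1) (1-a2) (1-a3) b1 b2 (1-b3) (by linarith) (by linarith) (by linarith) (by linarith) (by linarith) (by linarith),
    k (1-a1) (1-a2) (1-a3) b1 b2 b3 (by linarith) (by linarith) (by linarith) (by linarith) (by linarith) (by linarith),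
    k (1-a1) (1-a2) a3 (1-b1) (1-b2) (1-b3) (by linarith) (by linarith) (by linarith) (by linarith) (by linarith) (by linarith),
    k (1-a1) (1-a2) a3 (1-b1) (1-b2) b3 (by linarith) (by linarith) (by linarith) (by linarith) (by linarith) (by linarith),
    k (1-a1) (1-a2) a3 (1-b1) b2 (1-b3) (by linarith) (by linarith) (by linarith) (by linarith) (by linarith) (by linarith),
    k (1-a1) (1-a2) a3 (1-b1) b2 b3 (by linarith) (by linarith) (by linarith) (by linarith) (by linarith) (by linarith),
    k (1-a1) (1-a2) a3 b1 (1-b2) (1-b3) (by linarith) (by linarith) (by linarith) (by linarith) (by linarith) (by linarith),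
    k (1-a1) (1-a2) a3 b1 (1-b2) b3 (by linarith) (by linarith) (by linarith) (by linarith) (by linarith) (by linarith),
    k (1-a1) (1-a2) a3 b1 b2 (1-b3) (by linarith) (by linarith) (by linarith) (by linarith) (by linarith) (by linarith),
    k (1-a1) (1-a2) a3 b1 b2 b3 (by linarith) (by linarith) (by linarith) (by linarith) (by linarith) (by linarith),
    k (1-a1) a2 (1-a3) (1-b1) (1-b2) (1-b3) (by linarith) (by linarith) (by linarith) (by linarith) (by linarith) (by linarith),
    k (1-a1) a2 (1-a3) (1-b1) (1-b2) b3 (by linarith) (by linarith) (by linarith) (by linarith) (by linarith) (by linarith),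
    k (1-a1) a2 (1-a3) (1-b1) b2 (1-b3) (by linarith) (by linarith) (by linarith) (by linarith) (by linarith) (by linarith),
    k (1-a1) a2 (1-a3) (1-b1) b2 b3 (by linarith) (by linarith) (by linarith) (by linarith) (by linarith) (by linarith),
    k (1-a1) a2 (1-a3) b1 (1-b2) (1-b3) (by linarith) (by linarith) (by linarith) (by linarith) (by linarith) (by linarith),
    k (1-a1) a2 (1-a3) b1 (1-b2) b3 (by linarith) (by linarith) (by linarith) (by linarith) (by linarith) (by linarith),
    k (1-a1) a2 (1-a3) b1 b2 (1-b3) (by linarith) (by linarith) (by linarith) (by linarith) (by linarith) (by linarith),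
    k (1-a1) a2 (1-a3) b1 b2 b3 (by linarith) (by linarith) (by linarith) (by linarith) (by linarith) (by linarith),
    k (1-a1) a2 a3 (1-b1) (1-b2) (1-b3) (by linarith) (by linarith) (by linarith) (by linarith) (by linarith) (by linarith),
    k (1-a1) a2 a3 (1-b1) (1-b2) b3 (by linarith) (by linarith) (by linarith) (by linarith) (by linarith) (by linarith),
    k (1-a1) a2 a3 (1-b1) b2 (1-b3) (by linarith) (by linarith) (by linarith) (by linarith) (by linarith) (by linarith),
    k (1-a1) a2 a3 (1-b1) b2 b3 (by linarith) (by linarith) (by linarith) (by linarith) (by linarith) (by linarith),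
    k (1-a1) a2 a3 b1 (1-b2) (1-b3) (by linarith) (by linarith) (by linarith) (by linarith) (by linarith) (by linarith),
    k a1 (1-a2) (1-a3) (1-b1) (1-b2) (1-b3) (by linarith) (by linarith) (by linarith) (by linarith) (by linarith) (by linarith),
    k a1 (1-a2) (1-a3) (1-b1) (1-b2) b3 (by linarith) (by linarith) (by linarith) (by linarith) (by linarith) (by linarith),
    k a1 (1-a2) (1-a3) (1-b1) b2 (1-b3) (by linarith) (by linarith) (by linarith) (by linarith) (by linarith) (by linarith),
    k a1 (1-a2) (1-a3) (1-b1) b2 b3 (by linarith) (by linarith) (by linarith) (by linarith) (by linarith) (by linarith),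
    k a1 (1-a2) (1-a3) b1 (1-b2) (1-b3) (by linarith) (by linarith) (by linarith) (by linarith) (by linarith) (by linarith),
    k a1 (1-a2) (1-a3) b1 (1-b2) b3 (by linarith) (by linarith) (by linarith) (by linarith) (by linarith) (by linarith),
    k a1 (1-a2) (1-a3) b1 b2 (1-b3) (by linarith) (by linarith) (by linarith) (by linarith) (by linarith) (by linarith),
    k a1 (1-a2) (1-a3) b1 b2 b3 (by linarith) (by linarith) (by linarith) (by linarith) (by linarith) (by linarith),
    k a1 (1-a2) a3 (1-b1) (1-b2) (1-b3) (by linarith) (by linarith) (by linarith) (by linarith) (by linarith) (by linarith),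
    k a1 (1-a2) a3 (1-b1) (1-b2) b3 (by linarith) (by linarith) (by linarith) (by linarith) (by linarith) (by linarith),
    k a1 (1-a2) a3 (1-b1) b2 (1-b3) (by linarith) (by linarith) (by linarith) (by linarith) (by linarith) (by linarith),
    k a1 (1-a2) a3 b1 (1-b2) (1-b3) (by linarith) (by linarith) (by linarith) (by linarith) (by linarith) (by linarith),
    k a1 (1-a2) a3 b1 (1-b2) b3 (by linarith) (by linarith) (by linarith) (by linarith) (by linarith) (by linarith),
    k a1 a2 (1-a3) (1-b1) (1-b2) (1-b3) (by linarith) (by linarith) (by linarith) (by linarith) (by linarith) (by linarith),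
    k a1 a2 (1-a3) (1-b1) (1-b2) b3 (by linarith) (by linarith) (by linarith) (by linarith) (by linarith) (by linarith),
    k a1 a2 (1-a3) (1-b1) b2 (1-b3) (by linarith) (by linarith) (by linarith) (by linarith) (by linarith) (by linarith),
    k a1 a2 (1-a3) b1 (1-b2) (1-b3) (by linarith) (by linarith) (by linarith) (by linarith) (by linarith) (by linarith),
    k a1 a2 (1-a3) b1 b2 (1-b3) (by linarith) (by linarith) (by linarith) (by linarith) (by linarith) (by linarith),
    k a1 a2 a3 (1-b1) (1-b2) (1-b3) (by linarith) (by linarith) (by linarith) (by linarith) (by linarith) (by linarith),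
    k a1 a2 a3 (1-b1) (1-b2) b3 (by linarith) (by linarith) (by linarith) (by linarith) (by linarith) (by linarith),
    k a1 a2 a3 (1-b1) b2 (1-b3) (by linarith) (by linarith) (by linarith) (by linarith) (by linarith) (by linarith),
    k a1 a2 a3 b1 (1-b2) (1-b3) (by linarith) (by linarith) (by linarith) (by linarith) (by linarith) (by linarith)
  ]

private lemma sumprod (t : Fin 3 → Fin 2 → ℝ) :
    (∑ j : Fin 3 → Fin 2, ∏ i : Fin 3, (1 + t i (j i)))
      = (2 + t 0 0 + t 0 1) * (2 + t 1 0 + t 1 1) * (2 + t 2 0 + t 2 1) := by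
  have h := Finset.prod_univ_sum (fun _ : Fin 3 => (Finset.univ : Finset (Fin 2)))
    (fun i k => 1 + t i k)
  rw [Fintype.piFinset_univ] at h
  rw [← h, Fin.prod_univ_three]
  simp [Fin.sum_univ_two]
  ring

theorem stmt3 :
    (∀ t : Fin 3 → Fin 2 → ℝ,
      (∀ i j, 0 ≤ t i j) → (∀ i j, t i j ≤ 1) →
      (t 0 0 * t 1 0 * t 2 0) ^ ((2:ℝ)/3) + (t 0 1 * t 1 1 * t 2 1) ^ ((2:ℝ)/3)
        ≤ (2:ℝ) ^ ((2:ℝ)/3) →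
      (∑ j : Fin 3 → Fin 2, ∏ i : Fin 3, (1 + t i (j i)))
        ≤ 16 * (3 + ((2:ℝ) ^ ((2:ℝ)/3) - 1) ^ ((3:ℝ)/2))) ∧
    (∀ t : Fin 3 → Fin 2 → ℝ,
      (∀ i, t i 0 = 1) → t 0 1 = 1 → t 1 1 = 1 →
      t 2 1 = ((2:ℝ) ^ ((2:ℝ)/3) - 1) ^ ((3:ℝ)/2) →
      (∑ j : Fin 3 → Fin 2, ∏ i : Fin 3, (1 + t i (j i)))
        = 16 * (3 + ((2:ℝ) ^ ((2:ℝ)/3) - 1) ^ ((3:ℝ)/2))) := by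
  constructor
  · intro t h0 h1 hcon
    set u : ℝ := (2:ℝ) ^ ((2:ℝ)/3) with hu
    have hu1 : (1:ℝ) ≤ u := by
      have h := Real.rpow_le_rpow_of_exponent_le (by norm_num : (1:ℝ) ≤ 2)
        (by norm_num : (0:ℝ) ≤ 2/3)
      rwa [Real.rpow_zero] at h
    set d : ℝ := Real.sqrt (u - 1) with hd
    have hd0 : 0 ≤ d := Real.sqrt_nonneg _
    have hdsq : d^2 = u - 1 := Real.sq_sqrt (by linarith)
    have hu3 : u^(3:ℕ) = 4 := by
      rw [hu, ← Real.rpow_natCast ((2:ℝ) ^ ((2:ℝ)/3)) 3,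
        ← Real.rpow_mul (by norm_num : (0:ℝ) ≤ 2)]
      have : ((2:ℝ)/3) * (3:ℕ) = ((2:ℕ):ℝ) := by norm_num
      rw [this, Real.rpow_natCast]
      norm_num
    have hd4 : (d^2+1)^3 = 4 := by
      rw [hdsq]
      calc (u - 1 + 1)^3 = u^(3:ℕ) := by ring
      _ = 4 := hu3
    have hd3 : (u - 1) ^ ((3:ℝ)/2) = d^3 := by
      rw [hd, Real.sqrt_eq_rpow, ← Real.rpow_natCast ((u-1) ^ ((1:ℝ)/2)) 3,
        ← Real.rpow_mul (by linarith : (0:ℝ) ≤ u - 1)]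
      norm_num
    set A : ℝ := t 0 0 * t 1 0 * t 2 0 with hA
    set B : ℝ := t 0 1 * t 1 1 * t 2 1 with hB
    have hA0 : 0 ≤ A := mul_nonneg (mul_nonneg (h0 0 0) (h0 1 0)) (h0 2 0)
    have hB0 : 0 ≤ B := mul_nonneg (mul_nonneg (h0 0 1) (h0 1 1)) (h0 2 1)
    have hA1 : A ≤ 1 := by
      have p1 : t 0 0 * t 1 0 ≤ 1 := by nlinarith [h0 0 0, h0 1 0, h1 0 0, h1 1 0]
      have p0 : 0 ≤ t 0 0 * t 1 0 := mul_nonneg (h0 0 0) (h0 1 0)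
      nlinarith [h0 2 0, h1 2 0]
    have hB1 : B ≤ 1 := by
      have p1 : t 0 1 * t 1 1 ≤ 1 := by nlinarith [h0 0 1, h0 1 1, h1 0 1, h1 1 1]
      have p0 : 0 ≤ t 0 1 * t 1 1 := mul_nonneg (h0 0 1) (h0 1 1)
      nlinarith [h0 2 1, h1 2 1]
    set x : ℝ := A ^ ((1:ℝ)/3) with hx
    set y : ℝ := B ^ ((1:ℝ)/3) with hy
    have hx0 : 0 ≤ x := Real.rpow_nonneg hA0 _
    have hy0 : 0 ≤ y := Real.rpow_nonneg hB0 _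
    have hx1 : x ≤ 1 := Real.rpow_le_one hA0 hA1 (by norm_num)
    have hy1 : y ≤ 1 := Real.rpow_le_one hB0 hB1 (by norm_num)
    have hx3 : x^3 = A := by
      rw [hx, ← Real.rpow_natCast (A ^ ((1:ℝ)/3)) 3, ← Real.rpow_mul hA0]
      norm_num
    have hy3 : y^3 = B := by
      rw [hy, ← Real.rpow_natCast (B ^ ((1:ℝ)/3)) 3, ← Real.rpow_mul hB0]
      norm_num
    have hx2 : x^2 = A ^ ((2:ℝ)/3) := by
      rw [hx, ← Real.rpow_natCast (A ^ ((1:ℝ)/3)) 2, ← Real.rpow_mul hA0]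
      norm_num
    have hy2 : y^2 = B ^ ((2:ℝ)/3) := by
      rw [hy, ← Real.rpow_natCast (B ^ ((1:ℝ)/3)) 2, ← Real.rpow_mul hB0]
      norm_num
    have hcirc : x^2 + y^2 ≤ 1 + d^2 := by
      rw [hx2, hy2, hdsq]
      linarith [hcon]
    have hkey := lemB x y d hx0 hx1 hy0 hy1 hd0 hd4 hcirc
    have hCle := lemC (t 0 0) (t 1 0) (t 2 0) (t 0 1) (t 1 1) (t 2 1)
      (h0 0 0) (h1 0 0) (h0 1 0) (h1 1 0) (h0 2 0) (h1 2 0)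
      (h0 0 1) (h1 0 1) (h0 1 1) (h1 1 1) (h0 2 1) (h1 2 1)
    rw [sumprod t, hd3]
    calc (2 + t 0 0 + t 0 1) * (2 + t 1 0 + t 1 1) * (2 + t 2 0 + t 2 1)
        ≤ 4*(3+A)*(3+B) := hCle
      _ = 4*(3+x^3)*(3+y^3) := by rw [hx3, hy3]
      _ ≤ 16*(3+d^3) := by nlinarith [hkey]
  · intro t e0 e1 e2 e3
    rw [sumprod t, e0 0, e0 1, e0 2, e1, e2, e3]
    ring
end

section
/- For all t_{i,j} ∈ [0,1] (i = 1,2,3; j = 1,2) with t_{i,1}² + t_{i,2}² ≤ 1 for every i ∈ {1,2,3}, the quantity H = Σ_{j₁,j₂,j₃ ∈ {1,2}} Π_{i=1}^{3}(1 + t_{i,j_i}) satisfies H ≤ 8·(1 + 1/√2)³ = 2√2·(1 + √2)³. -/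
theorem stmt6 (t : Fin 3 → Fin 2 → ℝ)
    (h0 : ∀ i j, 0 ≤ t i j) (h1 : ∀ i j, t i j ≤ 1)
    (hc : ∀ i : Fin 3, (t i 0) ^ 2 + (t i 1) ^ 2 ≤ 1) :
    (∑ j : Fin 3 → Fin 2, ∏ i : Fin 3, (1 + t i (j i)))
      ≤ 8 * (1 + 1 / Real.sqrt 2) ^ 3 := by
  have hs2 : Real.sqrt 2 ^ 2 = 2 := Real.sq_sqrt (by norm_num)
  have hs2pos : (0:ℝ) < Real.sqrt 2 := Real.sqrt_pos.mpr (by norm_num)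
  have key : (∑ j : Fin 3 → Fin 2, ∏ i : Fin 3, (1 + t i (j i)))
      = ∏ i : Fin 3, (∑ j : Fin 2, (1 + t i j)) := by
    rw [Finset.prod_univ_sum]
    rw [← Fintype.sum_equiv (Equiv.refl (Fin 3 → Fin 2))]
    · rfl
    · intro x; rfl
  rw [key]
  have hfac : ∀ i : Fin 3, (∑ j : Fin 2, (1 + t i j)) ≤ 2 + Real.sqrt 2 := by
    intro i
    have h := hc i
    have hsum : t i 0 + t i 1 ≤ Real.sqrt 2 := by
      nlinarith [sq_nonneg (t i 0 - t i 1), sq_nonneg (t i 0 + t i 1 - Real.sqrt 2),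
        h0 i 0, h0 i 1, hs2pos]
    rw [Fin.sum_univ_two]
    linarith
  have hnn : ∀ i : Fin 3, (0:ℝ) ≤ ∑ j : Fin 2, (1 + t i j) := by
    intro i; rw [Fin.sum_univ_two]; nlinarith [h0 i 0, h0 i 1]
  calc (∏ i : Fin 3, (∑ j : Fin 2, (1 + t i j)))
      ≤ ∏ i : Fin 3, (2 + Real.sqrt 2) := by
        apply Finset.prod_le_prod (fun i _ => hnn i) (fun i _ => hfac i)
    _ = (2 + Real.sqrt 2) ^ 3 := by simp [Finset.prod_const]
    _ = 8 * (1 + 1 / Real.sqrt 2) ^ 3 := by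
        have hm : Real.sqrt 2 * Real.sqrt 2 = 2 := Real.mul_self_sqrt (by norm_num)
        rw [show (1:ℝ) + 1 / Real.sqrt 2 = (2 + Real.sqrt 2) / 2 from by
          field_simp; linear_combination -hm]
        ring
end

section
/- For all t_{i,j} ∈ [0,1] (i = 1,2,3; j = 1,2) with t_{2,1}² + t_{2,2}² ≤ 1 and t_{3,1}² + t_{3,2}² ≤ 1 (no constraint on t_{1,1}, t_{1,2} beyond [0,1]), the quantity H = Σ_{j₁,j₂,j₃ ∈ {1,2}} Π_{i=1}^{3}(1 + t_{i,j_i}) satisfies H ≤ 16·(1 + 1/√2)² = 8·(1 + √2)². -/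
theorem stmt7 (t : Fin 3 → Fin 2 → ℝ)
    (h0 : ∀ i j, 0 ≤ t i j) (h1 : ∀ i j, t i j ≤ 1)
    (hc2 : (t 1 0) ^ 2 + (t 1 1) ^ 2 ≤ 1)
    (hc3 : (t 2 0) ^ 2 + (t 2 1) ^ 2 ≤ 1) :
    (∑ j : Fin 3 → Fin 2, ∏ i : Fin 3, (1 + t i (j i)))
      ≤ 16 * (1 + 1 / Real.sqrt 2) ^ 2 := by
  have hfact : (∑ j : Fin 3 → Fin 2, ∏ i : Fin 3, (1 + t i (j i)))
      = ∏ i : Fin 3, ∑ j : Fin 2, (1 + t i j) := by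
    rw [Finset.prod_univ_sum]
    rw [Fintype.piFinset_univ]
  rw [hfact, Fin.prod_univ_three]
  simp only [Fin.sum_univ_two]
  have hs2 : (1:ℝ) < Real.sqrt 2 := by
    nlinarith [Real.sq_sqrt (by norm_num : (2:ℝ) ≥ 0), Real.sqrt_nonneg 2]
  have hsq : Real.sqrt 2 ^ 2 = 2 := Real.sq_sqrt (by norm_num)
  have key : ∀ i : Fin 3, (t i 0) ^ 2 + (t i 1) ^ 2 ≤ 1 →
      t i 0 + t i 1 ≤ Real.sqrt 2 := by
    intro i h
    nlinarith [sq_nonneg (t i 0 - t i 1), h0 i 0, h0 i 1, hsq, hs2,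
      sq_nonneg (t i 0 + t i 1 - Real.sqrt 2)]
  have k2 := key 1 hc2
  have k3 := key 2 hc3
  have b1 : (1 + t 0 0) + (1 + t 0 1) ≤ 4 := by
    have := h1 0 0; have := h1 0 1; linarith
  have p2 : (0:ℝ) ≤ (1 + t 1 0) + (1 + t 1 1) := by
    have := h0 1 0; have := h0 1 1; linarith
  have p3 : (0:ℝ) ≤ (1 + t 2 0) + (1 + t 2 1) := by
    have := h0 2 0; have := h0 2 1; linarith
  have p1 : (0:ℝ) ≤ (1 + t 0 0) + (1 + t 0 1) := by
    have := h0 0 0; have := h0 0 1; linarith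
  have hrhs : 16 * (1 + 1 / Real.sqrt 2) ^ 2 = 4 * (2 + Real.sqrt 2) ^ 2 := by
    have hpos : Real.sqrt 2 ≠ 0 := by positivity
    field_simp
    nlinarith [hsq]
  rw [hrhs]
  have hb : ((1 + t 0 0) + (1 + t 0 1)) * (((1 + t 1 0) + (1 + t 1 1)) *
      ((1 + t 2 0) + (1 + t 2 1))) ≤ 4 * ((2 + Real.sqrt 2) * (2 + Real.sqrt 2)) := by
    apply mul_le_mul b1 _ (by positivity) (by norm_num)
    apply mul_le_mul (by linarith) (by linarith) p3 (by linarith)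
  calc (1 + t 0 0 + (1 + t 0 1)) * (1 + t 1 0 + (1 + t 1 1)) * (1 + t 2 0 + (1 + t 2 1))
      = ((1 + t 0 0) + (1 + t 0 1)) * (((1 + t 1 0) + (1 + t 1 1)) *
        ((1 + t 2 0) + (1 + t 2 1))) := by ring
    _ ≤ 4 * ((2 + Real.sqrt 2) * (2 + Real.sqrt 2)) := hb
    _ = 4 * (2 + Real.sqrt 2) ^ 2 := by ring
end

section
/- For all t_{i,j} ∈ [0,1] (i = 1,2,3; j = 1,2) with t_{3,1}² + t_{3,2}² ≤ 1, the quantity H = Σ_{j₁,j₂,j₃ ∈ {1,2}} Π_{i=1}^{3}(1 + t_{i,j_i}) satisfies H ≤ 16·(2 + √2). -/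
theorem stmt8 (t : Fin 3 → Fin 2 → ℝ)
    (h0 : ∀ i j, 0 ≤ t i j) (h1 : ∀ i j, t i j ≤ 1)
    (hc3 : (t 2 0) ^ 2 + (t 2 1) ^ 2 ≤ 1) :
    (∑ j : Fin 3 → Fin 2, ∏ i : Fin 3, (1 + t i (j i)))
      ≤ 16 * (2 + Real.sqrt 2) := by
  rw [← Fintype.prod_sum (fun i j => 1 + t i j)]
  rw [Fin.prod_univ_three]
  have hs : t 2 0 + t 2 1 ≤ Real.sqrt 2 := by
    nlinarith [Real.sq_sqrt (by norm_num : (2:ℝ) ≥ 0), Real.sqrt_nonneg 2,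
      sq_nonneg (t 2 0 - t 2 1), h0 2 0, h0 2 1]
  have e : ∀ i : Fin 3, ∑ j : Fin 2, (1 + t i j) = 2 + t i 0 + t i 1 := by
    intro i; rw [Fin.sum_univ_two]; ring
  rw [e, e, e]
  have h2 : Real.sqrt 2 ≥ 0 := Real.sqrt_nonneg 2
  have hA : 2 + t 0 0 + t 0 1 ≤ 4 := by linarith [h1 0 0, h1 0 1]
  have hB : 2 + t 1 0 + t 1 1 ≤ 4 := by linarith [h1 1 0, h1 1 1]
  have hC : 2 + t 2 0 + t 2 1 ≤ 2 + Real.sqrt 2 := by linarith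
  have hA0 : (0:ℝ) ≤ 2 + t 0 0 + t 0 1 := by linarith [h0 0 0, h0 0 1]
  have hB0 : (0:ℝ) ≤ 2 + t 1 0 + t 1 1 := by linarith [h0 1 0, h0 1 1]
  have hC0 : (0:ℝ) ≤ 2 + t 2 0 + t 2 1 := by linarith [h0 2 0, h0 2 1]
  calc (2 + t 0 0 + t 0 1) * (2 + t 1 0 + t 1 1) * (2 + t 2 0 + t 2 1)
      ≤ 4 * 4 * (2 + Real.sqrt 2) := by
        apply mul_le_mul (mul_le_mul hA hB hB0 (by norm_num)) hC hC0 (by norm_num)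
    _ = 16 * (2 + Real.sqrt 2) := by ring
end

section
/- For all t_{i,j} ∈ [0,1] (i = 1,2,3; j = 1,2), if for at least one index i ∈ {1,2,3} we have t_{i,1}² + t_{i,2}² ≤ 1, then (t_{1,1}·t_{2,1}·t_{3,1})^(2/3) + (t_{1,2}·t_{2,2}·t_{3,2})^(2/3) ≤ 2^(2/3). -/
lemma cube_rpow23 {a : ℝ} (ha : 0 ≤ a) : (a ^ ((2:ℝ)/3)) ^ (3:ℕ) = a ^ 2 := by
  rw [← Real.rpow_natCast (a ^ ((2:ℝ)/3)) 3, ← Real.rpow_mul ha]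
  norm_num [Real.rpow_two]

lemma key {a b : ℝ} (ha : 0 ≤ a) (hb : 0 ≤ b) (h : a ^ 2 + b ^ 2 ≤ 1) :
    a ^ ((2:ℝ)/3) + b ^ ((2:ℝ)/3) ≤ (2:ℝ) ^ ((2:ℝ)/3) := by
  set u := a ^ ((2:ℝ)/3) with hu
  set v := b ^ ((2:ℝ)/3) with hv
  set c := (2:ℝ) ^ ((2:ℝ)/3) with hc
  have hu0 : 0 ≤ u := Real.rpow_nonneg ha _
  have hv0 : 0 ≤ v := Real.rpow_nonneg hb _
  have hc0 : 0 ≤ c := Real.rpow_nonneg (by norm_num) _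
  have hu3 : u ^ (3:ℕ) = a ^ 2 := cube_rpow23 ha
  have hv3 : v ^ (3:ℕ) = b ^ 2 := cube_rpow23 hb
  have hc3 : c ^ (3:ℕ) = 4 := by
    rw [hc, cube_rpow23 (by norm_num : (0:ℝ) ≤ 2)]; norm_num
  have hcube : (u + v) ^ (3:ℕ) ≤ c ^ (3:ℕ) := by
    have h4 : (u + v) ^ (3:ℕ) ≤ 4 * (u ^ (3:ℕ) + v ^ (3:ℕ)) := by
      nlinarith [sq_nonneg (u - v), mul_nonneg hu0 hv0, sq_nonneg (u + v)]
    rw [hc3]; rw [hu3, hv3] at h4; linarith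
  exact le_of_pow_le_pow_left₀ (by norm_num) hc0 hcube

theorem stmt16 (t : Fin 3 → Fin 2 → ℝ)
    (h0 : ∀ i j, 0 ≤ t i j) (h1 : ∀ i j, t i j ≤ 1)
    (hc : ∃ i : Fin 3, (t i 0) ^ 2 + (t i 1) ^ 2 ≤ 1) :
    (t 0 0 * t 1 0 * t 2 0) ^ ((2:ℝ)/3) + (t 0 1 * t 1 1 * t 2 1) ^ ((2:ℝ)/3)
      ≤ (2:ℝ) ^ ((2:ℝ)/3) := by
  obtain ⟨i, hi⟩ := hc
  have hmul : ∀ j : Fin 2, t 0 j * t 1 j * t 2 j ≤ t i j := by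
    intro j
    have A : t 0 j * t 1 j * t 2 j ≤ t 0 j :=
      (mul_le_of_le_one_right (mul_nonneg (h0 0 j) (h0 1 j)) (h1 2 j)).trans
        (mul_le_of_le_one_right (h0 0 j) (h1 1 j))
    have B : t 0 j * t 1 j * t 2 j ≤ t 1 j :=
      (mul_le_of_le_one_right (mul_nonneg (h0 0 j) (h0 1 j)) (h1 2 j)).trans
        (mul_le_of_le_one_left (h0 1 j) (h1 0 j))
    have C : t 0 j * t 1 j * t 2 j ≤ t 2 j :=
      mul_le_of_le_one_left (h0 2 j) (mul_le_one₀ (h1 0 j) (h0 1 j) (h1 1 j))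
    fin_cases i <;> assumption
  have hp0 : ∀ j : Fin 2, (0:ℝ) ≤ t 0 j * t 1 j * t 2 j := fun j =>
    mul_nonneg (mul_nonneg (h0 0 j) (h0 1 j)) (h0 2 j)
  have e23 : (0:ℝ) ≤ (2:ℝ)/3 := by norm_num
  have hr0 := Real.rpow_le_rpow (hp0 0) (hmul 0) e23
  have hr1 := Real.rpow_le_rpow (hp0 1) (hmul 1) e23
  have := key (h0 i 0) (h0 i 1) hi
  linarith
end
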